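/- Assume the bound ∫_s^t ∫_X p(s,x,u,z)·p(u,z,t,y)·q(u,z) dm(z) du ≤ (η + β(t-s))·p(s,x,t,y) holds for all s < t, x,y ∈ X, with constants 0 ≤ η < 1 and β ≥ 0. Then for all n ≥ 0, s < t, x,y ∈ X: p_n(s,x,t,y) ≤ p(s,x,t,y)·∑_{k=0}^n C(n,k)·(β(t-s))^k/k!·η^(n-k). -/

import Mathlib

open MeasureTheory Set
open scoped ENNReal

/-!
Write `S_n(τ) = ∑_k C(n,k) (βτ)^k/k! η^(n-k)`. Then `S_0 = 1` and, by Pascal's rule,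
`S_{n+1}(τ) = η S_n(τ) + β ∫_0^τ S_n`; hence `S_n(τ) = η^n + ∫_0^τ S_n'` with `S_n' ≥ 0`.

Inserting `p_n ≤ p S_n` into the definition of `p_{n+1}` gives
`p_{n+1}(s,x,t,y) ≤ ∫_s^t S_n(u-s) h(u) du`, where `h(u) = ∫ p(s,x,u,z) p(u,z,t,y) q(u,z) dz`.
Chapman–Kolmogorov at an intermediate time `v` turns the assumed bound into the tail bounds
`∫_v^t h ≤ (η + β(t-v)) p(s,x,t,y)` for `s ≤ v < t`. Summation by parts against the increasing
weight `S_n(u-s)` (Tonelli on `s < v < u < t`) then yields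
`∫_s^t S_n(u-s) h(u) du ≤ (η S_n(t-s) + β ∫_0^(t-s) S_n) p(s,x,t,y) = S_{n+1}(t-s) p(s,x,t,y)`.

Tonelli in `z` needs `μ` to be σ-finite: it is, because `z ↦ p(0,x,1,z) p(1,z,2,x)` is positive
with finite integral `p(0,x,2,x)`.
-/

/-- The terms `p_n` of the perturbation series. -/
noncomputable def pseq {X : Type*} [MeasurableSpace X] (μ : Measure X)
    (p : ℝ → X → ℝ → X → ℝ≥0∞) (q : ℝ → X → ℝ≥0∞) : ℕ → ℝ → X → ℝ → X → ℝ≥0∞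
  | 0 => p
  | n + 1 => fun s x t y =>
      ∫⁻ u in Set.Ioo s t, ∫⁻ z, pseq μ p q n s x u z * p u z t y * q u z ∂μ

open scoped Nat

lemma setLIntegral_Ioo_ofReal_comp_sub {f : ℝ → ℝ} (hf : Continuous f)
    (hf0 : ∀ σ, 0 ≤ σ → 0 ≤ f σ) {s u : ℝ} (hsu : s ≤ u) :
    ∫⁻ v in Ioo s u, ENNReal.ofReal (f (v - s))
      = ENNReal.ofReal (∫ σ in (0 : ℝ)..u - s, f σ) := by
  have hint : IntegrableOn (fun v => f (v - s)) (Ioo s u) :=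
    (Continuous.integrableOn_Icc (by fun_prop)).mono_set Ioo_subset_Icc_self
  have hnn : 0 ≤ᵐ[volume.restrict (Ioo s u)] fun v => f (v - s) :=
    (ae_restrict_iff' measurableSet_Ioo).2 <| ae_of_all _ fun v hv => hf0 _ (by linarith [hv.1])
  rw [← ofReal_integral_eq_lintegral_ofReal hint hnn, ← integral_Ioc_eq_integral_Ioo,
    ← intervalIntegral.integral_of_le hsu, intervalIntegral.integral_comp_sub_right, sub_self]

lemma setLIntegral_Ioo_primitive_mul (c : ℝ≥0∞) {g h : ℝ → ℝ≥0∞} (hg : Measurable g)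
    (hh : Measurable h) (s t : ℝ) :
    ∫⁻ u in Ioo s t, (c + ∫⁻ v in Ioo s u, g v) * h u
      = c * (∫⁻ u in Ioo s t, h u) + ∫⁻ v in Ioo s t, g v * ∫⁻ u in Ioo v t, h u := by
  have hK : Measurable fun a : ℝ × ℝ => (Iio a.1).indicator g a.2 * h a.1 := by
    simp only [indicator_apply, mem_Iio]
    exact (Measurable.ite (measurableSet_lt measurable_snd measurable_fst)
      (hg.comp measurable_snd) measurable_const).mul (hh.comp measurable_fst)
  have hinner : ∀ u ∈ Ioo s t, (∫⁻ v in Ioo s u, g v) * h u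
      = ∫⁻ v in Ioo s t, (Iio u).indicator g v * h u := by
    intro u hu
    rw [lintegral_mul_const _ (hg.indicator measurableSet_Iio),
      setLIntegral_indicator measurableSet_Iio, inter_comm, Ioo_inter_Iio, min_eq_right hu.2.le]
  have houter : ∀ v ∈ Ioo s t, ∫⁻ u in Ioo s t, (Iio u).indicator g v * h u
      = g v * ∫⁻ u in Ioo v t, h u := by
    intro v hv
    have hswap (u : ℝ) : (Iio u).indicator g v * h u = g v * (Ioi v).indicator h u := by
      by_cases hvu : v < u <;> simp [indicator, hvu]
    simp_rw [hswap]
    rw [lintegral_const_mul _ (hh.indicator measurableSet_Ioi),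
      setLIntegral_indicator measurableSet_Ioi, inter_comm, Ioo_inter_Ioi, max_eq_right hv.1.le]
  calc ∫⁻ u in Ioo s t, (c + ∫⁻ v in Ioo s u, g v) * h u
      = ∫⁻ u in Ioo s t, (c * h u + ∫⁻ v in Ioo s t, (Iio u).indicator g v * h u) :=
        setLIntegral_congr_fun measurableSet_Ioo fun u hu => by rw [add_mul, hinner u hu]
    _ = c * (∫⁻ u in Ioo s t, h u)
          + ∫⁻ v in Ioo s t, ∫⁻ u in Ioo s t, (Iio u).indicator g v * h u := by
        rw [lintegral_add_left (hh.const_mul c), lintegral_const_mul _ hh,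
          lintegral_lintegral_swap hK.aemeasurable]
    _ = c * (∫⁻ u in Ioo s t, h u) + ∫⁻ v in Ioo s t, g v * ∫⁻ u in Ioo v t, h u := by
        rw [setLIntegral_congr_fun measurableSet_Ioo houter]

lemma setLIntegral_Ioo_mul_le_of_tail_le {s t : ℝ} (hst : s < t) {a b c P : ℝ≥0∞}
    {g h W : ℝ → ℝ≥0∞} (hg : Measurable g) (hh : Measurable h)
    (hW : ∀ u ∈ Ioc s t, W u = c + ∫⁻ v in Ioo s u, g v)
    (htail : ∀ v ∈ Ico s t, ∫⁻ u in Ioo v t, h u ≤ (a + b * ENNReal.ofReal (t - v)) * P) :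
    ∫⁻ u in Ioo s t, W u * h u ≤ (a * W t + b * ∫⁻ u in Ioo s t, W u) * P := by
  have hWh (f : ℝ → ℝ≥0∞) : ∫⁻ u in Ioo s t, W u * f u
      = ∫⁻ u in Ioo s t, (c + ∫⁻ v in Ioo s u, g v) * f u :=
    setLIntegral_congr_fun measurableSet_Ioo fun u hu => by rw [hW u (Ioo_subset_Ioc_self hu)]
  have hWint : ∫⁻ u in Ioo s t, W u
      = c * ENNReal.ofReal (t - s) + ∫⁻ v in Ioo s t, g v * ENNReal.ofReal (t - v) := by
    simpa [Real.volume_Ioo] using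
      (hWh 1).trans (setLIntegral_Ioo_primitive_mul c hg measurable_const s t)
  have hmr : Measurable fun v => g v * ENNReal.ofReal (t - v) := hg.mul (by fun_prop)
  have hsplit (v : ℝ) : g v * ((a + b * ENNReal.ofReal (t - v)) * P)
      = a * P * g v + b * P * (g v * ENNReal.ofReal (t - v)) := by ring
  calc ∫⁻ u in Ioo s t, W u * h u
      = c * (∫⁻ u in Ioo s t, h u) + ∫⁻ v in Ioo s t, g v * ∫⁻ u in Ioo v t, h u :=
        (hWh h).trans (setLIntegral_Ioo_primitive_mul c hg hh s t)
    _ ≤ c * ((a + b * ENNReal.ofReal (t - s)) * P)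
          + ∫⁻ v in Ioo s t, g v * ((a + b * ENNReal.ofReal (t - v)) * P) := by
        refine add_le_add (by gcongr; exact htail s ⟨le_rfl, hst⟩)
          (setLIntegral_mono' measurableSet_Ioo fun v hv => ?_)
        gcongr
        exact htail v ⟨hv.1.le, hv.2⟩
    _ = (a * (c + ∫⁻ v in Ioo s t, g v) + b * (c * ENNReal.ofReal (t - s)
          + ∫⁻ v in Ioo s t, g v * ENNReal.ofReal (t - v))) * P := by
        simp_rw [hsplit]
        rw [lintegral_add_left (hg.const_mul _), lintegral_const_mul _ hg,
          lintegral_const_mul _ hmr]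
        ring
    _ = (a * W t + b * ∫⁻ u in Ioo s t, W u) * P := by rw [hW t ⟨hst, le_rfl⟩, hWint]

lemma sigmaFinite_of_lintegral_ne_top {X : Type*} [MeasurableSpace X] {μ : Measure X}
    {D : X → ℝ≥0∞} (hD : Measurable D) (hD0 : ∀ z, D z ≠ 0) (hint : ∫⁻ z, D z ∂μ ≠ ⊤) :
    SigmaFinite μ := by
  have : IsFiniteMeasure (μ.withDensity D) := isFiniteMeasure_withDensity hint
  rw [← withDensity_inv_same hD (ae_of_all _ hD0) ((ae_lt_top hD hint).mono fun _ h => h.ne)]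
  exact SigmaFinite.withDensity_of_ne_top' fun z => ENNReal.inv_ne_top.2 (hD0 z)

lemma mul_integral_pow_div_factorial (β τ : ℝ) (k : ℕ) :
    β * ∫ σ in (0 : ℝ)..τ, (β * σ) ^ k / (k ! : ℝ) = (β * τ) ^ (k + 1) / ((k + 1) ! : ℝ) := by
  have hk : ((k + 1) ! : ℝ) = (k + 1) * k ! := by push_cast [Nat.factorial_succ]; ring
  simp only [mul_pow, mul_div_assoc, intervalIntegral.integral_const_mul, integral_pow,
    intervalIntegral.integral_div]
  rw [hk]
  field_simp
  ring

noncomputable def pseqBound (η β : ℝ) (n : ℕ) (τ : ℝ) : ℝ :=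
  ∑ k ∈ Finset.range (n + 1),
    (Nat.choose n k : ℝ) * (β * τ) ^ k / (Nat.factorial k : ℝ) * η ^ (n - k)

noncomputable def pseqBoundDeriv (η β : ℝ) : ℕ → ℝ → ℝ
  | 0 => 0
  | n + 1 => fun τ => η * pseqBoundDeriv η β n τ + β * pseqBound η β n τ

section Bound

variable {η β : ℝ}

@[fun_prop] lemma continuous_pseqBound (η β : ℝ) (n : ℕ) : Continuous (pseqBound η β n) := by
  unfold pseqBound
  fun_prop

lemma pseqBound_nonneg (hη : 0 ≤ η) (hβ : 0 ≤ β) (n : ℕ) {τ : ℝ} (hτ : 0 ≤ τ) :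
    0 ≤ pseqBound η β n τ :=
  Finset.sum_nonneg fun k _ => by have := mul_nonneg hβ hτ; positivity

lemma pseqBound_succ (η β : ℝ) (n : ℕ) (τ : ℝ) :
    pseqBound η β (n + 1) τ
      = η * pseqBound η β n τ + β * ∫ σ in (0 : ℝ)..τ, pseqBound η β n σ := by
  have hint : ∀ k ∈ Finset.range (n + 1), IntervalIntegrable
      (fun σ => (n.choose k : ℝ) * (β * σ) ^ k / (k ! : ℝ) * η ^ (n - k)) volume 0 τ :=
    fun k _ => by apply Continuous.intervalIntegrable; fun_prop
  have hterm (k : ℕ) :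
      β * ∫ σ in (0 : ℝ)..τ, (n.choose k : ℝ) * (β * σ) ^ k / (k ! : ℝ) * η ^ (n - k)
        = n.choose k * ((β * τ) ^ (k + 1) / ((k + 1) ! : ℝ) * η ^ (n - k)) := by
    simp only [mul_div_assoc, intervalIntegral.integral_const_mul,
      intervalIntegral.integral_mul_const]
    rw [← mul_integral_pow_div_factorial]
    ring
  have hpascal := Finset.sum_choose_succ_mul (fun i j => (β * τ) ^ i / (i ! : ℝ) * η ^ j) n
  simp only [pseqBound, intervalIntegral.integral_finsetSum hint, Finset.mul_sum, hterm]
  simp only [mul_div_assoc, mul_assoc] at hpascal ⊢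
  rw [hpascal]
  congr 1
  refine Finset.sum_congr rfl fun k hk => ?_
  rw [Nat.sub_add_comm (Finset.mem_range_succ_iff.mp hk), pow_succ]
  ring

@[fun_prop] lemma continuous_pseqBoundDeriv (η β : ℝ) (n : ℕ) :
    Continuous (pseqBoundDeriv η β n) := by
  induction n with
  | zero => exact continuous_const
  | succ n ih => simp only [pseqBoundDeriv]; fun_prop

lemma pseqBoundDeriv_nonneg (hη : 0 ≤ η) (hβ : 0 ≤ β) (n : ℕ) {τ : ℝ} (hτ : 0 ≤ τ) :
    0 ≤ pseqBoundDeriv η β n τ := by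
  induction n with
  | zero => exact le_rfl
  | succ n ih =>
    have := pseqBound_nonneg hη hβ n hτ
    simp only [pseqBoundDeriv]
    positivity

lemma pseqBound_eq_pow_add_integral (η β : ℝ) (n : ℕ) (τ : ℝ) :
    pseqBound η β n τ = η ^ n + ∫ σ in (0 : ℝ)..τ, pseqBoundDeriv η β n σ := by
  induction n with
  | zero => simp [pseqBound, pseqBoundDeriv]
  | succ n ih =>
    simp only [pseqBoundDeriv]
    rw [intervalIntegral.integral_add (by apply Continuous.intervalIntegrable; fun_prop)
      (by apply Continuous.intervalIntegrable; fun_prop), intervalIntegral.integral_const_mul,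
      intervalIntegral.integral_const_mul, pseqBound_succ, ih]
    ring

lemma ofReal_pseqBound_eq_add_setLIntegral (hη : 0 ≤ η) (hβ : 0 ≤ β) (n : ℕ) {s u : ℝ}
    (hsu : s ≤ u) :
    ENNReal.ofReal (pseqBound η β n (u - s)) = ENNReal.ofReal (η ^ n)
      + ∫⁻ v in Ioo s u, ENNReal.ofReal (pseqBoundDeriv η β n (v - s)) := by
  rw [setLIntegral_Ioo_ofReal_comp_sub (continuous_pseqBoundDeriv η β n)
      (fun _ => pseqBoundDeriv_nonneg hη hβ n) hsu,
    ← ENNReal.ofReal_add (by positivity) (intervalIntegral.integral_nonneg (sub_nonneg.2 hsu)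
      fun σ hσ => pseqBoundDeriv_nonneg hη hβ n hσ.1),
    ← pseqBound_eq_pow_add_integral]

lemma ofReal_pseqBound_succ (hη : 0 ≤ η) (hβ : 0 ≤ β) (n : ℕ) {s t : ℝ} (hst : s ≤ t) :
    ENNReal.ofReal (pseqBound η β (n + 1) (t - s))
      = ENNReal.ofReal η * ENNReal.ofReal (pseqBound η β n (t - s))
        + ENNReal.ofReal β * ∫⁻ u in Ioo s t, ENNReal.ofReal (pseqBound η β n (u - s)) := by
  rw [setLIntegral_Ioo_ofReal_comp_sub (continuous_pseqBound η β n)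
      (fun _ => pseqBound_nonneg hη hβ n) hst, ← ENNReal.ofReal_mul hη, ← ENNReal.ofReal_mul hβ,
    ← ENNReal.ofReal_add (mul_nonneg hη (pseqBound_nonneg hη hβ n (sub_nonneg.2 hst)))
      (mul_nonneg hβ (intervalIntegral.integral_nonneg (sub_nonneg.2 hst)
        fun σ hσ => pseqBound_nonneg hη hβ n hσ.1)),
    pseqBound_succ]

end Bound

section Transition

variable {X : Type*} [MeasurableSpace X] {μ : Measure X} {p : ℝ → X → ℝ → X → ℝ≥0∞}
  {q : ℝ → X → ℝ≥0∞}

lemma lintegral_Ioo_tail_le [SigmaFinite μ]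
    (hmp : Measurable fun a : ℝ × X × ℝ × X => p a.1 a.2.1 a.2.2.1 a.2.2.2)
    (hmq : Measurable fun a : ℝ × X => q a.1 a.2)
    (hCK : ∀ s u t : ℝ, ∀ x y : X, s < u → u < t →
      ∫⁻ z, p s x u z * p u z t y ∂μ = p s x t y)
    {B : ℝ → ℝ≥0∞} (hbound : ∀ s t : ℝ, ∀ x y : X, s < t →
      ∫⁻ u in Ioo s t, ∫⁻ z, p s x u z * p u z t y * q u z ∂μ ≤ B (t - s) * p s x t y)
    {s v t : ℝ} (hsv : s ≤ v) (hvt : v < t) (x y : X) :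
    ∫⁻ u in Ioo v t, ∫⁻ z, p s x u z * p u z t y * q u z ∂μ ≤ B (t - v) * p s x t y := by
  rcases hsv.eq_or_lt with rfl | hsv
  · exact hbound s t x y hvt
  have hG : Measurable fun a : ℝ × X => ∫⁻ z, p v a.2 a.1 z * p a.1 z t y * q a.1 z ∂μ :=
    Measurable.lintegral_prod_right' (f := fun a : (ℝ × X) × X =>
      p v a.1.2 a.1.1 a.2 * p a.1.1 a.2 t y * q a.1.1 a.2) (by fun_prop)
  calc ∫⁻ u in Ioo v t, ∫⁻ z, p s x u z * p u z t y * q u z ∂μ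
      = ∫⁻ u in Ioo v t, ∫⁻ z, ∫⁻ w, p s x v w * (p v w u z * p u z t y * q u z) ∂μ ∂μ :=
        setLIntegral_congr_fun measurableSet_Ioo fun u hu => lintegral_congr fun z => by
          rw [← hCK s v u x z hsv hu.1, mul_assoc, ← lintegral_mul_const _ (by fun_prop)]
          simp only [mul_assoc]
    _ = ∫⁻ u in Ioo v t, ∫⁻ w, p s x v w * ∫⁻ z, p v w u z * p u z t y * q u z ∂μ ∂μ :=
        lintegral_congr fun u => by
          rw [lintegral_lintegral_swap (by fun_prop)]
          exact lintegral_congr fun w => lintegral_const_mul _ (by fun_prop)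
    _ = ∫⁻ w, p s x v w * (∫⁻ u in Ioo v t, ∫⁻ z, p v w u z * p u z t y * q u z ∂μ) ∂μ := by
        have hpG : Measurable fun a : ℝ × X => p s x v a.2 := by fun_prop
        rw [lintegral_lintegral_swap (hpG.mul hG).aemeasurable]
        exact lintegral_congr fun w => lintegral_const_mul _ (by fun_prop)
    _ ≤ ∫⁻ w, p s x v w * (B (t - v) * p v w t y) ∂μ := by
        gcongr with w
        exact hbound v t w y hvt
    _ = B (t - v) * p s x t y := by
        rw [← hCK s v t x y hsv hvt, ← lintegral_const_mul _ (by fun_prop)]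
        simp only [mul_left_comm]

lemma sigmaFinite_of_chapmanKolmogorov
    (hmp : Measurable fun a : ℝ × X × ℝ × X => p a.1 a.2.1 a.2.2.1 a.2.2.2)
    (hpos : ∀ s t : ℝ, ∀ x y : X, s < t → 0 < p s x t y ∧ p s x t y < ⊤)
    (hCK : ∀ s u t : ℝ, ∀ x y : X, s < u → u < t →
      ∫⁻ z, p s x u z * p u z t y ∂μ = p s x t y) (x : X) :
    SigmaFinite μ :=
  sigmaFinite_of_lintegral_ne_top (D := fun z => p 0 x 1 z * p 1 z 2 x) (by fun_prop)
    (fun z => mul_ne_zero (hpos 0 1 x z one_pos).1.ne' (hpos 1 2 z x one_lt_two).1.ne')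
    (by rw [hCK 0 1 2 x x one_pos one_lt_two]; exact (hpos 0 2 x x two_pos).2.ne)

lemma pseq_succ_le_setLIntegral
    (hmp : Measurable fun a : ℝ × X × ℝ × X => p a.1 a.2.1 a.2.2.1 a.2.2.2)
    (hmq : Measurable fun a : ℝ × X => q a.1 a.2) {n : ℕ} {s t : ℝ} {x y : X} {W : ℝ → ℝ≥0∞}
    (hW : ∀ u ∈ Ioo s t, ∀ z, pseq μ p q n s x u z ≤ p s x u z * W u) :
    pseq μ p q (n + 1) s x t y
      ≤ ∫⁻ u in Ioo s t, W u * ∫⁻ z, p s x u z * p u z t y * q u z ∂μ :=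
  setLIntegral_mono' measurableSet_Ioo fun u hu => by
    rw [← lintegral_const_mul _ (by fun_prop)]
    refine lintegral_mono fun z => ?_
    calc pseq μ p q n s x u z * p u z t y * q u z
        ≤ p s x u z * W u * p u z t y * q u z := by gcongr; exact hW u hu z
      _ = W u * (p s x u z * p u z t y * q u z) := by ring

end Transition

theorem pseq_upper_bound_general {X : Type*} [MeasurableSpace X] (μ : Measure X)
    (p : ℝ → X → ℝ → X → ℝ≥0∞) (q : ℝ → X → ℝ≥0∞)
    (hmp : Measurable fun a : ℝ × X × ℝ × X => p a.1 a.2.1 a.2.2.1 a.2.2.2)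
    (hmq : Measurable fun a : ℝ × X => q a.1 a.2)
    (hpos : ∀ s t : ℝ, ∀ x y : X, s < t → 0 < p s x t y ∧ p s x t y < ⊤)
    (hCK : ∀ s u t : ℝ, ∀ x y : X, s < u → u < t →
      ∫⁻ z, p s x u z * p u z t y ∂μ = p s x t y)
    (η β : ℝ) (hη0 : 0 ≤ η) (hβ : 0 ≤ β)
    (hbound : ∀ s t : ℝ, ∀ x y : X, s < t →
      (∫⁻ u in Set.Ioo s t, ∫⁻ z, p s x u z * p u z t y * q u z ∂μ)
        ≤ ENNReal.ofReal (η + β * (t - s)) * p s x t y)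
    (n : ℕ) (s t : ℝ) (x y : X) (hst : s < t) :
    pseq μ p q n s x t y
      ≤ p s x t y * ENNReal.ofReal (∑ k ∈ Finset.range (n + 1),
          (Nat.choose n k : ℝ) * (β * (t - s)) ^ k / (Nat.factorial k : ℝ) * η ^ (n - k)) := by
  have := sigmaFinite_of_chapmanKolmogorov hmp hpos hCK x
  induction n generalizing s t x y with
  | zero => simp [pseq]
  | succ n ih =>
    have hh : Measurable fun u => ∫⁻ z, p s x u z * p u z t y * q u z ∂μ :=
      Measurable.lintegral_prod_right' (f := fun a : ℝ × X =>
        p s x a.1 a.2 * p a.1 a.2 t y * q a.1 a.2) (by fun_prop)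
    have htail : ∀ v ∈ Ico s t, ∫⁻ u in Ioo v t, ∫⁻ z, p s x u z * p u z t y * q u z ∂μ
        ≤ (ENNReal.ofReal η + ENNReal.ofReal β * ENNReal.ofReal (t - v)) * p s x t y :=
      fun v hv => by
        rw [← ENNReal.ofReal_mul hβ,
          ← ENNReal.ofReal_add hη0 (mul_nonneg hβ (sub_nonneg.2 hv.2.le))]
        exact lintegral_Ioo_tail_le hmp hmq hCK (B := fun τ => ENNReal.ofReal (η + β * τ))
          hbound hv.1 hv.2 x y
    calc pseq μ p q (n + 1) s x t y
        ≤ ∫⁻ u in Ioo s t, ENNReal.ofReal (pseqBound η β n (u - s))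
            * ∫⁻ z, p s x u z * p u z t y * q u z ∂μ :=
          pseq_succ_le_setLIntegral hmp hmq fun u hu z => ih s u x z hu.1
      _ ≤ (ENNReal.ofReal η * ENNReal.ofReal (pseqBound η β n (t - s))
            + ENNReal.ofReal β * ∫⁻ u in Ioo s t, ENNReal.ofReal (pseqBound η β n (u - s)))
            * p s x t y :=
          setLIntegral_Ioo_mul_le_of_tail_le
            (g := fun v => ENNReal.ofReal (pseqBoundDeriv η β n (v - s))) hst (by fun_prop) hh
            (fun u hu => ofReal_pseqBound_eq_add_setLIntegral hη0 hβ n hu.1.le) htail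
      _ = p s x t y * ENNReal.ofReal (pseqBound η β (n + 1) (t - s)) := by
        rw [ofReal_pseqBound_succ hη0 hβ n hst.le, mul_comm]

/-- Lemma 3.5: under the bound ∫∫ p p q ≤ (η + β(t-s)) p with 0 ≤ η < 1, β ≥ 0,
each term of the perturbation series satisfies
p_n ≤ p · ∑_{k=0}^n C(n,k) (β(t-s))^k/k! η^{n-k}. -/
theorem pseq_upper_bound {X : Type*} [MeasurableSpace X] (μ : Measure X)
    (p : ℝ → X → ℝ → X → ℝ≥0∞) (q : ℝ → X → ℝ≥0∞)
    (hmp : Measurable fun a : ℝ × X × ℝ × X => p a.1 a.2.1 a.2.2.1 a.2.2.2)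
    (hmq : Measurable fun a : ℝ × X => q a.1 a.2)
    (hzero : ∀ s t : ℝ, ∀ x y : X, t ≤ s → p s x t y = 0)
    (hpos : ∀ s t : ℝ, ∀ x y : X, s < t → 0 < p s x t y ∧ p s x t y < ⊤)
    (hCK : ∀ s u t : ℝ, ∀ x y : X, s < u → u < t →
      ∫⁻ z, p s x u z * p u z t y ∂μ = p s x t y)
    (η β : ℝ) (hη0 : 0 ≤ η) (hη1 : η < 1) (hβ : 0 ≤ β)
    (hbound : ∀ s t : ℝ, ∀ x y : X, s < t →
      (∫⁻ u in Set.Ioo s t, ∫⁻ z, p s x u z * p u z t y * q u z ∂μ)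
        ≤ ENNReal.ofReal (η + β * (t - s)) * p s x t y)
    (n : ℕ) (s t : ℝ) (x y : X) (hst : s < t) :
    pseq μ p q n s x t y
      ≤ p s x t y * ENNReal.ofReal (∑ k ∈ Finset.range (n + 1),
          (Nat.choose n k : ℝ) * (β * (t - s)) ^ k / (Nat.factorial k : ℝ) * η ^ (n - k)) :=
  pseq_upper_bound_general μ p q hmp hmq hpos hCK η β hη0 hβ hbound n s t x y hst
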